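/- Let m ≤ 5 and let C be a nonempty adequate collection of 3-element subsets of Fin m. Then C is dense. -/
import Mathlib


/-- A collection `C` of 3-element subsets of `Fin m` is adequate if for every
`i : Fin m` and every `T ∈ C` there is a 2-element subset `S ⊆ T` with `i ∉ S`
and `S ∪ {i} ∈ C`. -/
def Adequate {m : ℕ} (C : Finset (Finset (Fin m))) : Prop :=
  ∀ i : Fin m, ∀ T ∈ C, ∃ S : Finset (Fin m),
    S ⊆ T ∧ S.card = 2 ∧ i ∉ S ∧ insert i S ∈ C

/-- A collection `C` of 3-element subsets of `Fin m` is dense if there are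
distinct `i, j` such that `{i,j,k} ∈ C` for at least `m - 3` elements
`k ∉ {i, j}`. -/
def DenseColl {m : ℕ} (C : Finset (Finset (Fin m))) : Prop :=
  ∃ i j : Fin m, i ≠ j ∧ m - 3 ≤
    (Finset.univ.filter
      (fun k : Fin m => k ≠ i ∧ k ≠ j ∧ ({i, j, k} : Finset (Fin m)) ∈ C)).card

theorem stmt_8 {m : ℕ} (hm : m ≤ 5) (C : Finset (Finset (Fin m)))
    (h3 : ∀ T ∈ C, T.card = 3) (hne : C.Nonempty) (hC : Adequate C) :
    DenseColl C := by
  obtain ⟨T, hT⟩ := hne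
  have hTcard := h3 T hT
  by_cases hm3 : m ≤ 3
  · obtain ⟨x, y, z, hxy, hxz, hyz, hTeq⟩ := Finset.card_eq_three.mp hTcard
    exact ⟨x, y, hxy, by omega⟩
  · push_neg at hm3
    have hcompl : 0 < Tᶜ.card := by
      rw [Finset.card_compl, Fintype.card_fin, hTcard]; omega
    obtain ⟨i, hi'⟩ := Finset.card_pos.mp hcompl
    have hi : i ∉ T := Finset.mem_compl.mp hi'
    obtain ⟨S, hST, hScard, hiS, hins⟩ := hC i T hT
    obtain ⟨x, y, hxy, hSeq⟩ := Finset.card_eq_two.mp hScard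
    have hSssub : S ⊂ T := Finset.ssubset_iff_subset_ne.mpr ⟨hST, by
      intro h; rw [h, hTcard] at hScard; omega⟩
    obtain ⟨t, htT, htS⟩ := Finset.exists_of_ssubset hSssub
    have hsub' : insert t S ⊆ T := Finset.insert_subset htT hST
    have hTeq : insert t S = T := by
      apply Finset.eq_of_subset_of_card_le hsub'
      rw [Finset.card_insert_of_notMem htS, hScard, hTcard]
    have hti : t ≠ i := fun h => hi (h ▸ htT)
    have htx : t ≠ x := fun h => htS (by rw [hSeq, h]; simp)
    have hty : t ≠ y := fun h => htS (by rw [hSeq, h]; simp)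
    have hix : i ≠ x := fun h => hiS (by rw [hSeq, h]; simp)
    have hiy : i ≠ y := fun h => hiS (by rw [hSeq, h]; simp)
    have e1 : ({x, y, t} : Finset (Fin m)) = T := by
      rw [← hTeq, hSeq]; ext b; simp; tauto
    have e2 : ({x, y, i} : Finset (Fin m)) = insert i S := by
      rw [hSeq]; ext b; simp; tauto
    refine ⟨x, y, hxy, ?_⟩
    have hsub : ({t, i} : Finset (Fin m)) ⊆ Finset.univ.filter
        (fun k : Fin m => k ≠ x ∧ k ≠ y ∧ ({x, y, k} : Finset (Fin m)) ∈ C) := by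
      intro a ha
      rcases Finset.mem_insert.mp ha with h | h
      · subst h
        exact Finset.mem_filter.mpr ⟨Finset.mem_univ _, htx, hty, e1 ▸ hT⟩
      · rw [Finset.mem_singleton] at h
        subst h
        exact Finset.mem_filter.mpr ⟨Finset.mem_univ _, hix, hiy, e2 ▸ hins⟩
    have hcard2 : ({t, i} : Finset (Fin m)).card = 2 := by
      rw [Finset.card_insert_of_notMem (by simp [hti]), Finset.card_singleton]
    have := Finset.card_le_card hsub
    omega
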